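/- arXiv:1708.03112 — 6 statements merged into one kernel-verified Lean document; each statement's English description precedes it below -/
import Mathlib

section
/- Let F, G : ℝ^n → ℝ be positively one-homogeneous convex functions, and suppose (μ, x) is an eigenpair with respect to (F, G), G(x) ≠ 0, G(y) ≠ 0, ∂F(x) ⊆ ∂F(y) and ∂G(x) ⊆ ∂G(y). Then (μ, y) is also an eigenpair with respect to (F, G) and F(y)/G(y) = F(x)/G(x). -/
/-- The convex subdifferential of `F` at `x` (with the standard dot product on `Fin n → ℝ`). -/
def subgrad {n : ℕ} (F : (Fin n → ℝ) → ℝ) (x : Fin n → ℝ) : Set (Fin n → ℝ) :=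
  {u | ∀ y, (∑ i, u i * (y i - x i)) ≤ F y - F x}

lemma euler {n : ℕ} (F : (Fin n → ℝ) → ℝ)
    (hFh : ∀ t : ℝ, 0 ≤ t → ∀ x, F (t • x) = t * F x)
    {x u : Fin n → ℝ} (hu : u ∈ subgrad F x) :
    ∑ i, u i * x i = F x := by
  have h0 : F 0 = 0 := by
    have := hFh 0 le_rfl 0
    simpa using this
  have h1 := hu 0
  have h2 := hu ((2 : ℝ) • x)
  have hF2 : F ((2 : ℝ) • x) = 2 * F x := hFh 2 (by norm_num) x
  simp only [Pi.zero_apply, zero_sub, h0, Pi.smul_apply, smul_eq_mul] at h1 h2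
  rw [hF2] at h2
  have e1 : ∑ i, u i * (-x i) = -∑ i, u i * x i := by
    simp [mul_neg, Finset.sum_neg_distrib]
  have e2 : ∑ i, u i * (2 * x i - x i) = ∑ i, u i * x i := by
    congr 1; ext i; ring
  rw [e1] at h1
  rw [e2] at h2
  linarith

/-- If `(μ, x)` is an eigenpair with respect to `(F, G)`, `G x ≠ 0 ≠ G y`,
`∂F(x) ⊆ ∂F(y)` and `∂G(x) ⊆ ∂G(y)`, then `(μ, y)` is also an eigenpair and
`F y / G y = F x / G x`. -/
theorem stmt2 {n : ℕ} (F G : (Fin n → ℝ) → ℝ)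
    (hFc : ConvexOn ℝ Set.univ F) (hGc : ConvexOn ℝ Set.univ G)
    (hFh : ∀ t : ℝ, 0 ≤ t → ∀ x, F (t • x) = t * F x)
    (hGh : ∀ t : ℝ, 0 ≤ t → ∀ x, G (t • x) = t * G x)
    (μ : ℝ) (x y : Fin n → ℝ)
    (heig : ∃ u ∈ subgrad G x, μ • u ∈ subgrad F x)
    (hGx : G x ≠ 0) (hGy : G y ≠ 0)
    (hF : subgrad F x ⊆ subgrad F y) (hG : subgrad G x ⊆ subgrad G y) :
    (∃ u ∈ subgrad G y, μ • u ∈ subgrad F y) ∧ F y / G y = F x / G x := by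
  obtain ⟨u, huG, huF⟩ := heig
  have huGy : u ∈ subgrad G y := hG huG
  have huFy : μ • u ∈ subgrad F y := hF huF
  refine ⟨⟨u, huGy, huFy⟩, ?_⟩
  have eGx : ∑ i, u i * x i = G x := euler G hGh huG
  have eGy : ∑ i, u i * y i = G y := euler G hGh huGy
  have eFx : ∑ i, (μ • u) i * x i = F x := euler F hFh huF
  have eFy : ∑ i, (μ • u) i * y i = F y := euler F hFh huFy
  simp only [Pi.smul_apply, smul_eq_mul] at eFx eFy
  have hFx : F x = μ * G x := by
    rw [← eFx, ← eGx, Finset.mul_sum]; congr 1; ext i; ring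
  have hFy : F y = μ * G y := by
    rw [← eFy, ← eGy, Finset.mul_sum]; congr 1; ext i; ring
  rw [hFx, hFy, mul_div_assoc, mul_div_assoc, div_self hGx, div_self hGy]
end

section
/- Let K be a finite pure d-dimensional simplicial complex, A ⊆ V an independent set (|A ∩ F| ≤ d for every face F), m_{d-1} the minimum number of d-faces containing a (d−1)-face. Then for every i-face F with all vertices in A and 0 ≤ i ≤ d−1, the number of (i+1)-faces containing F and meeting V∖A is at least m_{d-1}. In particular, every vertex v ∈ A has at least m_{d-1} neighbors in V∖A, so the number of edges between A and V∖A is at least |A|·m_{d-1}. -/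
/-!
Call the `(|F|+1)`-faces containing a face `F` its cofaces. Removing a vertex `w ∉ F` from the
cofaces of `insert w F` injects them into the cofaces of `F`, so by purity and downward
induction on `|F|` every non-facet has at least `m` cofaces. For `F ⊆ A`: if some coface `G` of
`F` lies in `A`, then `G` is again not a facet by independence, and its cofaces leaving `A`
inject into those of `F`; otherwise all cofaces of `F` leave `A`. The edge bound is the case of
vertices, double counted.
-/

open Finset

namespace SimplicialComplex

variable {V : Type*} [DecidableEq V]

def cofaces (K : Finset (Finset V)) (F : Finset V) : Finset (Finset V) :=
  K.filter fun G => G.card = F.card + 1 ∧ F ⊆ G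

variable {K : Finset (Finset V)}

theorem mem_cofaces {F G : Finset V} :
    G ∈ cofaces K F ↔ G ∈ K ∧ G.card = F.card + 1 ∧ F ⊆ G := by
  simp [cofaces]

theorem card_filter_cofaces_insert_le (hdown : ∀ F ∈ K, ∀ G ⊆ F, G ∈ K)
    {F : Finset V} {w : V} (hw : w ∉ F) (p : Finset V → Prop) [DecidablePred p]
    (hp : ∀ G, w ∈ G → p G → p (G.erase w)) :
    ((cofaces K (insert w F)).filter p).card ≤ ((cofaces K F).filter p).card := by
  refine card_le_card_of_injOn (·.erase w) (fun G hG => ?_) (fun G₁ hG₁ G₂ hG₂ h => ?_)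
  · simp only [coe_filter, Set.mem_ofPred_eq, mem_cofaces, card_insert_of_notMem hw,
      insert_subset_iff] at hG ⊢
    obtain ⟨⟨hGK, hGcard, hwG, hFG⟩, hpG⟩ := hG
    refine ⟨⟨hdown G hGK _ (erase_subset w G), ?_, ?_⟩, hp G hwG hpG⟩
    · rw [card_erase_of_mem hwG, hGcard]; rfl
    · exact fun x hx => mem_erase.mpr ⟨ne_of_mem_of_not_mem hx hw, hFG hx⟩
  · have hw₁ : w ∈ G₁ := (mem_cofaces.mp (mem_filter.mp hG₁).1).2.2 (mem_insert_self w F)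
    have hw₂ : w ∈ G₂ := (mem_cofaces.mp (mem_filter.mp hG₂).1).2.2 (mem_insert_self w F)
    rw [← insert_erase hw₁, ← insert_erase hw₂]
    exact congrArg (insert w) h

theorem card_cofaces_insert_le (hdown : ∀ F ∈ K, ∀ G ⊆ F, G ∈ K) {F : Finset V} {w : V}
    (hw : w ∉ F) : (cofaces K (insert w F)).card ≤ (cofaces K F).card := by
  simpa using card_filter_cofaces_insert_le hdown hw (fun _ => True) fun _ _ _ => trivial

variable {d m : ℕ}

theorem le_card_cofaces (hdown : ∀ F ∈ K, ∀ G ⊆ F, G ∈ K)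
    (hpure : ∀ F ∈ K, ∃ G ∈ K, F ⊆ G ∧ G.card = d + 1)
    (hm : ∀ F ∈ K, F.card = d → m ≤ (K.filter fun G => G.card = d + 1 ∧ F ⊆ G).card)
    (F : Finset V) (hF : F ∈ K) (hFd : F.card ≤ d) : m ≤ (cofaces K F).card := by
  rcases hFd.eq_or_lt with hFd | hFd
  · simpa [cofaces, hFd] using hm F hF hFd
  obtain ⟨G, hGK, hFG, hGcard⟩ := hpure F hF
  obtain ⟨w, hwG, hwF⟩ := exists_of_ssubset (ssubset_of_subset_of_ne hFG (by grind))
  calc m ≤ (cofaces K (insert w F)).card :=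
        le_card_cofaces hdown hpure hm _ (hdown G hGK _ (insert_subset hwG hFG))
          (by rw [card_insert_of_notMem hwF]; omega)
    _ ≤ (cofaces K F).card := card_cofaces_insert_le hdown hwF
termination_by d - F.card
decreasing_by rw [card_insert_of_notMem hwF]; omega

theorem card_le_of_subset_independent {A : Finset V} (hA : ∀ F ∈ K, (A ∩ F).card ≤ d)
    {F : Finset V} (hF : F ∈ K) (hFA : F ⊆ A) : F.card ≤ d := by
  simpa [inter_eq_right.mpr hFA] using hA F hF

theorem le_card_cofaces_not_subset (hdown : ∀ F ∈ K, ∀ G ⊆ F, G ∈ K)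
    (hpure : ∀ F ∈ K, ∃ G ∈ K, F ⊆ G ∧ G.card = d + 1)
    (hm : ∀ F ∈ K, F.card = d → m ≤ (K.filter fun G => G.card = d + 1 ∧ F ⊆ G).card)
    {A : Finset V} (hA : ∀ F ∈ K, (A ∩ F).card ≤ d)
    (F : Finset V) (hF : F ∈ K) (hFA : F ⊆ A) :
    m ≤ ((cofaces K F).filter fun G => ¬ G ⊆ A).card := by
  by_cases hex : ∃ G ∈ cofaces K F, G ⊆ A
  · obtain ⟨G, hG, hGA⟩ := hex
    obtain ⟨hGK, hGcard, hFG⟩ := mem_cofaces.mp hG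
    obtain ⟨w, hwG, hwF⟩ := exists_of_ssubset (ssubset_of_subset_of_ne hFG (by grind))
    have hG_eq : insert w F = G :=
      eq_of_subset_of_card_le (insert_subset hwG hFG) (by rw [card_insert_of_notMem hwF]; omega)
    have hwA : w ∈ A := hGA hwG
    calc m ≤ ((cofaces K G).filter fun G' => ¬ G' ⊆ A).card :=
          le_card_cofaces_not_subset hdown hpure hm hA G hGK hGA
      _ ≤ ((cofaces K F).filter fun G' => ¬ G' ⊆ A).card := by
          rw [← hG_eq]
          refine card_filter_cofaces_insert_le hdown hwF _ fun G' hwG' hG'A hsub => hG'A ?_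
          rw [← insert_erase hwG']
          exact insert_subset hwA hsub
  · push Not at hex
    rw [filter_true_of_mem fun G hG => (hex G hG)]
    exact le_card_cofaces hdown hpure hm F hF (card_le_of_subset_independent hA hF hFA)
termination_by d + 1 - F.card
decreasing_by
  have := card_le_of_subset_independent hA hGK hGA
  omega

theorem card_inter_eq_one_of_card_eq_two {e A : Finset V} {v : V} (he : e.card = 2)
    (hve : v ∈ e) (hvA : v ∈ A) (heA : ¬ e ⊆ A) : (e ∩ A).card = 1 := by
  have hlt : (e ∩ A).card < e.card :=
    card_lt_card (ssubset_of_subset_of_ne inter_subset_left (mt inter_eq_left.mp heA))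
  have hpos : 0 < (e ∩ A).card := card_pos.mpr ⟨v, mem_inter.mpr ⟨hve, hvA⟩⟩
  omega

end SimplicialComplex

open SimplicialComplex

theorem stmt14_general {V : Type*} [DecidableEq V] (K : Finset (Finset V)) (d : ℕ)
    (hdown : ∀ F ∈ K, ∀ G ⊆ F, G ∈ K)
    (hvert : ∀ v : V, {v} ∈ K)
    (hpure : ∀ F ∈ K, ∃ G ∈ K, F ⊆ G ∧ G.card = d + 1)
    (A : Finset V) (hA : ∀ F ∈ K, (A ∩ F).card ≤ d)
    (m : ℕ)
    (hm : ∀ F ∈ K, F.card = d →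
      m ≤ (K.filter fun G => G.card = d + 1 ∧ F ⊆ G).card) :
    (∀ i : ℕ, i + 1 ≤ d → ∀ F ∈ K, F.card = i + 1 → F ⊆ A →
        m ≤ (K.filter fun G => G.card = i + 2 ∧ F ⊆ G ∧ ¬ G ⊆ A).card) ∧
      A.card * m ≤ (K.filter fun e => e.card = 2 ∧ (e ∩ A).card = 1).card := by
  have hcofaces : ∀ F ∈ K, F ⊆ A →
      m ≤ ((cofaces K F).filter fun G => ¬ G ⊆ A).card :=
    le_card_cofaces_not_subset hdown hpure hm hA
  refine ⟨fun i _ F hF hcard hFA => ?_, ?_⟩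
  · simpa [cofaces, hcard, filter_filter, and_assoc] using hcofaces F hF hFA
  · rw [← mul_one (K.filter _).card]
    refine card_mul_le_card_mul (fun v e => v ∈ e) (fun v hv => ?_) fun e he => ?_
    · refine (hcofaces {v} (hvert v) (singleton_subset_iff.mpr hv)).trans (card_le_card ?_)
      intro e he
      simp only [mem_filter, mem_cofaces, card_singleton, singleton_subset_iff] at he
      obtain ⟨⟨heK, hcard, hve⟩, heA⟩ := he
      simp only [bipartiteAbove, mem_filter]
      exact ⟨⟨heK, hcard, card_inter_eq_one_of_card_eq_two hcard hve hv heA⟩, hve⟩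
    · rw [bipartiteBelow, filter_mem_eq_inter, inter_comm]
      exact (mem_filter.mp he).2.2.le

/-- In a finite pure `d`-dimensional simplicial complex, if `A` is an independent set and
`m` is the minimum number of `d`-faces containing a `(d-1)`-face, then every `i`-face with
all vertices in `A` (`0 ≤ i ≤ d-1`) is contained in at least `m` `(i+1)`-faces meeting
`V ∖ A`; in particular each vertex of `A` has at least `m` neighbours outside `A`, so
`|E(A, Aᶜ)| ≥ |A| · m`. -/
theorem stmt14 {V : Type*} [DecidableEq V] [Fintype V] (K : Finset (Finset V)) (d : ℕ)
    (hd : 1 ≤ d)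
    (hdown : ∀ F ∈ K, ∀ G ⊆ F, G ∈ K)
    (hvert : ∀ v : V, {v} ∈ K)
    (hdim : ∀ F ∈ K, F.card ≤ d + 1)
    (hpure : ∀ F ∈ K, ∃ G ∈ K, F ⊆ G ∧ G.card = d + 1)
    (A : Finset V) (hA : ∀ F ∈ K, (A ∩ F).card ≤ d)
    (m : ℕ)
    (hm : ∀ F ∈ K, F.card = d →
      m ≤ (K.filter fun G => G.card = d + 1 ∧ F ⊆ G).card) :
    (∀ i : ℕ, i + 1 ≤ d → ∀ F ∈ K, F.card = i + 1 → F ⊆ A →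
        m ≤ (K.filter fun G => G.card = i + 2 ∧ F ⊆ G ∧ ¬ G ⊆ A).card) ∧
      A.card * m ≤ (K.filter fun e => e.card = 2 ∧ (e ∩ A).card = 1).card :=
  stmt14_general K d hdown hvert hpure A hA m hm
end

section
/- Let K be a finite d-dimensional simplicial complex, A ⊆ V a maximum independent set (i.e., |A| = α_d and |A ∩ F| ≤ d for every face F). Then the number of edges between A and A^c = V∖A satisfies |E(A, A^c)| ≥ (|V| − α_d)·d, and consequently α_d ≥ |V|·d/(M_0 + d), where M_0 is the maximum vertex degree (maximum number of edges at a vertex). -/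
/-!
Adding any vertex `v ∉ A` to a maximum independent set `A` must break independence, so some
face `F ∋ v` already meets `A` in `d` vertices; the `d` pairs `{v, a}` with `a ∈ A ∩ F` are
cross edges at `v`. Every cross edge has exactly one endpoint outside `A`, so summing over
`Aᶜ` gives `|E(A, Aᶜ)| ≥ |Aᶜ| d`. On the other side every cross edge has an endpoint in `A`,
so `|E(A, Aᶜ)| ≤ |A| M₀`, and the two bounds combine to `|V| d ≤ |A| (M₀ + d)`.
-/

open Finset

section

variable {V : Type*} [DecidableEq V]

def IsIndependent (K : Finset (Finset V)) (d : ℕ) (B : Finset V) : Prop :=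
  ∀ F ∈ K, (B ∩ F).card ≤ d

def edgesAt (K : Finset (Finset V)) (v : V) : Finset (Finset V) :=
  K.filter fun e => e.card = 2 ∧ v ∈ e

def crossEdges (K : Finset (Finset V)) (A : Finset V) : Finset (Finset V) :=
  K.filter fun e => e.card = 2 ∧ (e ∩ A).card = 1

variable {K : Finset (Finset V)} {A : Finset V}

theorem card_sdiff_eq_one_of_mem_crossEdges {e : Finset V} (he : e ∈ crossEdges K A) :
    (e \ A).card = 1 := by
  obtain ⟨-, hcard, hone⟩ := mem_filter.mp he
  have := card_inter_add_card_sdiff e A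
  omega

theorem pairwiseDisjoint_crossEdges_filter_mem [Fintype V] :
    ((Aᶜ : Finset V) : Set V).PairwiseDisjoint fun v => (crossEdges K A).filter (v ∈ ·) := by
  intro v hv w hw hvw
  refine disjoint_left.mpr fun e hev hew => hvw ?_
  have hv' : v ∈ e \ A := mem_sdiff.mpr ⟨(mem_filter.mp hev).2, mem_compl.mp hv⟩
  have hw' : w ∈ e \ A := mem_sdiff.mpr ⟨(mem_filter.mp hew).2, mem_compl.mp hw⟩
  exact card_le_one.mp
    (card_sdiff_eq_one_of_mem_crossEdges (mem_filter.mp hev).1).le v hv' w hw'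

theorem card_crossEdges_le_sum_card_edgesAt :
    (crossEdges K A).card ≤ ∑ a ∈ A, (edgesAt K a).card := by
  refine (card_le_card fun e he => ?_).trans card_biUnion_le
  obtain ⟨heK, hcard, hone⟩ := mem_filter.mp he
  obtain ⟨a, ha⟩ : (e ∩ A).Nonempty := card_pos.mp (by omega)
  exact mem_biUnion.mpr ⟨a, (mem_inter.mp ha).2, mem_filter.mpr ⟨heK, hcard, (mem_inter.mp ha).1⟩⟩

theorem card_crossEdges_le_card_mul {M : ℕ} (hM : ∀ v, (edgesAt K v).card ≤ M) :
    (crossEdges K A).card ≤ A.card * M :=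
  card_crossEdges_le_sum_card_edgesAt.trans (by simpa using sum_le_sum fun a _ => hM a)

variable {d : ℕ}

theorem exists_face_card_inter_eq_of_notMem (hA : IsIndependent K d A)
    (hAmax : ∀ B, IsIndependent K d B → B.card ≤ A.card) {v : V} (hv : v ∉ A) :
    ∃ F ∈ K, v ∈ F ∧ (A ∩ F).card = d := by
  have hnot : ¬ IsIndependent K d (insert v A) := fun h => by
    have := hAmax _ h
    rw [card_insert_of_notMem hv] at this
    omega
  obtain ⟨F, hFK, hF⟩ : ∃ F ∈ K, d < (insert v A ∩ F).card := by
    simpa [IsIndependent] using hnot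
  have hvF : v ∈ F := by
    by_contra hvF
    rw [insert_inter_of_notMem hvF] at hF
    exact (hA F hFK).not_gt hF
  rw [insert_inter_of_mem hvF] at hF
  exact ⟨F, hFK, hvF, le_antisymm (hA F hFK) (by have := card_insert_le v (A ∩ F); omega)⟩

theorem le_card_crossEdges_filter_mem (hdown : ∀ F ∈ K, ∀ G ⊆ F, G ∈ K)
    (hA : IsIndependent K d A) (hAmax : ∀ B, IsIndependent K d B → B.card ≤ A.card)
    {v : V} (hv : v ∉ A) :
    d ≤ ((crossEdges K A).filter (v ∈ ·)).card := by
  obtain ⟨F, hFK, hvF, hcard⟩ := exists_face_card_inter_eq_of_notMem hA hAmax hv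
  rw [← hcard]
  refine card_le_card_of_injOn (fun a => {v, a}) (fun a ha => ?_) (fun a ha b _ hab => ?_)
  · obtain ⟨haA, haF⟩ := mem_inter.mp ha
    have hva : v ≠ a := by rintro rfl; exact hv haA
    have hpairA : ({v, a} : Finset V) ∩ A = {a} := by
      rw [insert_inter_of_notMem hv, singleton_inter_of_mem haA]
    refine mem_filter.mpr ⟨mem_filter.mpr ⟨hdown F hFK _ ?_, card_pair hva, ?_⟩, mem_insert_self v _⟩
    · exact insert_subset hvF (singleton_subset_iff.mpr haF)
    · rw [hpairA, card_singleton]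
  · have hva : v ≠ a := by rintro rfl; exact hv (mem_inter.mp ha).1
    have : a ∈ ({v, b} : Finset V) := by
      rw [← show ({v, a} : Finset V) = {v, b} from hab]
      exact mem_insert_of_mem (mem_singleton_self a)
    rcases mem_insert.mp this with rfl | h
    · exact absurd rfl hva
    · exact mem_singleton.mp h

theorem card_compl_mul_le_card_crossEdges [Fintype V] (hdown : ∀ F ∈ K, ∀ G ⊆ F, G ∈ K)
    (hA : IsIndependent K d A) (hAmax : ∀ B, IsIndependent K d B → B.card ≤ A.card) :
    Aᶜ.card * d ≤ (crossEdges K A).card :=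
  calc Aᶜ.card * d = ∑ _v ∈ Aᶜ, d := by rw [sum_const, smul_eq_mul]
    _ ≤ ∑ v ∈ Aᶜ, ((crossEdges K A).filter (v ∈ ·)).card :=
      sum_le_sum fun v hv => le_card_crossEdges_filter_mem hdown hA hAmax (mem_compl.mp hv)
    _ = (Aᶜ.biUnion fun v => (crossEdges K A).filter (v ∈ ·)).card :=
      (card_biUnion pairwiseDisjoint_crossEdges_filter_mem).symm
    _ ≤ (crossEdges K A).card := card_le_card fun e he => by
      obtain ⟨v, -, hev⟩ := mem_biUnion.mp he
      exact (mem_filter.mp hev).1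

end

theorem stmt15_general {V : Type*} [DecidableEq V] [Fintype V]
    (K : Finset (Finset V)) (d : ℕ)
    (hdown : ∀ F ∈ K, ∀ G ⊆ F, G ∈ K)
    (A : Finset V) (hA : ∀ F ∈ K, (A ∩ F).card ≤ d)
    (hAmax : ∀ B : Finset V, (∀ F ∈ K, (B ∩ F).card ≤ d) → B.card ≤ A.card)
    (M0 : ℕ)
    (hM0 : IsGreatest {k : ℕ | ∃ v : V, k = (K.filter fun e => e.card = 2 ∧ v ∈ e).card} M0) :
    (Fintype.card V - A.card) * d ≤
        (K.filter fun e => e.card = 2 ∧ (e ∩ A).card = 1).card ∧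
      Fintype.card V * d ≤ A.card * (M0 + d) := by
  have hlower : (Fintype.card V - A.card) * d ≤ (crossEdges K A).card := by
    rw [← card_compl]
    exact card_compl_mul_le_card_crossEdges hdown hA hAmax
  have hupper : (crossEdges K A).card ≤ A.card * M0 :=
    card_crossEdges_le_card_mul fun v => hM0.2 ⟨v, rfl⟩
  refine ⟨hlower, ?_⟩
  have hAV := card_le_univ A
  calc Fintype.card V * d = (Fintype.card V - A.card) * d + A.card * d := by
        rw [← add_mul, Nat.sub_add_cancel hAV]
    _ ≤ A.card * (M0 + d) := by rw [mul_add]; exact Nat.add_le_add_right (hlower.trans hupper) _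

/-- For a finite `d`-dimensional simplicial complex and a maximum independent set `A`
(`|A| = α_d`), the number of edges between `A` and `Aᶜ` is at least `(|V| − α_d)·d`, and
consequently `α_d ≥ |V|·d/(M₀ + d)` where `M₀` is the maximum vertex degree. -/
theorem stmt15 {V : Type*} [DecidableEq V] [Fintype V] [Nonempty V]
    (K : Finset (Finset V)) (d : ℕ) (hd : 1 ≤ d)
    (hdown : ∀ F ∈ K, ∀ G ⊆ F, G ∈ K)
    (hdim : ∀ F ∈ K, F.card ≤ d + 1)
    (A : Finset V) (hA : ∀ F ∈ K, (A ∩ F).card ≤ d)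
    (hAmax : ∀ B : Finset V, (∀ F ∈ K, (B ∩ F).card ≤ d) → B.card ≤ A.card)
    (M0 : ℕ)
    (hM0 : IsGreatest {k : ℕ | ∃ v : V, k = (K.filter fun e => e.card = 2 ∧ v ∈ e).card} M0) :
    (Fintype.card V - A.card) * d ≤
        (K.filter fun e => e.card = 2 ∧ (e ∩ A).card = 1).card ∧
      Fintype.card V * d ≤ A.card * (M0 + d) :=
  stmt15_general K d hdown A hA hAmax M0 hM0
end

section
/- For a finite graph G (vertices V, edges E), the maximum over nonzero x ∈ ℝ^V of Σ_{{i,j} ∈ E} |x_i + x_j| / Σ_{i ∈ V} |x_i| equals the maximum vertex degree of G. -/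
/-- For a finite simple graph (given by its set `E` of 2-element edge sets), the maximum of
the Rayleigh quotient `Σ_{{i,j} ∈ E} |xᵢ + xⱼ| / Σᵢ |xᵢ|` over nonzero `x` equals the maximum
vertex degree. -/
theorem stmt16 {V : Type*} [DecidableEq V] [Fintype V] [Nonempty V]
    (E : Finset (Finset V)) (hE : ∀ e ∈ E, e.card = 2)
    (Δ : ℕ)
    (hΔ : IsGreatest {k : ℕ | ∃ v : V, k = (E.filter fun e => v ∈ e).card} Δ) :
    IsGreatest {r : ℝ | ∃ x : V → ℝ, x ≠ 0 ∧
        r = (∑ e ∈ E, |∑ v ∈ e, x v|) / (∑ v, |x v|)} (Δ : ℝ) := by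
  obtain ⟨⟨v, hv⟩, hub⟩ := hΔ
  constructor
  · refine ⟨fun u => if u = v then 1 else 0, ?_, ?_⟩
    · intro h
      have := congrFun h v
      simp at this
    · have hden : (∑ u, |if u = v then (1:ℝ) else 0|) = 1 := by
        rw [Finset.sum_eq_single v]
        · simp
        · intro u _ hu; simp [hu]
        · simp
      have hnum : (∑ e ∈ E, |∑ u ∈ e, if u = v then (1:ℝ) else 0|) = (Δ : ℝ) := by
        have h1 : ∀ e ∈ E, |∑ u ∈ e, if u = v then (1:ℝ) else 0|
            = if v ∈ e then 1 else 0 := by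
          intro e _
          rw [Finset.sum_ite_eq' e v (fun _ => (1:ℝ))]
          split <;> simp
        rw [Finset.sum_congr rfl h1, ← Finset.sum_filter, Finset.sum_const, nsmul_eq_mul,
          mul_one, hv]
      rw [hnum, hden, div_one]
  · rintro r ⟨x, hx, rfl⟩
    obtain ⟨u0, hu0⟩ := Function.ne_iff.mp hx
    have hD : 0 < ∑ u, |x u| := by
      have h1 : |x u0| ≤ ∑ u, |x u| :=
        Finset.single_le_sum (fun i _ => abs_nonneg (x i)) (Finset.mem_univ u0)
      exact lt_of_lt_of_le (abs_pos.mpr hu0) h1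
    rw [div_le_iff₀ hD]
    calc (∑ e ∈ E, |∑ u ∈ e, x u|) ≤ ∑ e ∈ E, ∑ u ∈ e, |x u| :=
          Finset.sum_le_sum fun e _ => Finset.abs_sum_le_sum_abs _ _
      _ = ∑ e ∈ E, ∑ u, if u ∈ e then |x u| else 0 := by
          refine Finset.sum_congr rfl fun e _ => ?_
          rw [Finset.sum_ite_mem, Finset.univ_inter]
      _ = ∑ u, ∑ e ∈ E, if u ∈ e then |x u| else 0 := Finset.sum_comm
      _ = ∑ u, ((E.filter fun e => u ∈ e).card : ℝ) * |x u| := by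
          refine Finset.sum_congr rfl fun u _ => ?_
          rw [← Finset.sum_filter, Finset.sum_const, nsmul_eq_mul]
      _ ≤ ∑ u, (Δ : ℝ) * |x u| := by
          refine Finset.sum_le_sum fun u _ => ?_
          have : ((E.filter fun e => u ∈ e).card : ℕ) ≤ Δ := hub ⟨u, rfl⟩
          exact mul_le_mul_of_nonneg_right (by exact_mod_cast this) (abs_nonneg _)
      _ = (Δ : ℝ) * ∑ u, |x u| := by rw [Finset.mul_sum]
end

section
/- For real d ≥ 0 and χ ≥ d+2: max over (a,b) ≠ (0,0) of ( |a| + (d+1)|b| − |a + (d+1)b| ) / ( |a| + (χ−1)|b| ) = 2(d+1)/(d+χ), attained at a = −(d+1), b = 1. -/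
/-- For real `d ≥ 0` and `χ ≥ d + 2`, the maximum over `(a,b) ≠ (0,0)` of
`(|a| + (d+1)|b| − |a + (d+1)b|) / (|a| + (χ−1)|b|)` equals `2(d+1)/(d+χ)`,
attained at `a = −(d+1)`, `b = 1`. -/
theorem stmt18 (d χ : ℝ) (hd : 0 ≤ d) (hχ : d + 2 ≤ χ) :
    IsGreatest {r : ℝ | ∃ a b : ℝ, (a, b) ≠ (0, 0) ∧
        r = (|a| + (d + 1) * |b| - |a + (d + 1) * b|) / (|a| + (χ - 1) * |b|)}
      (2 * (d + 1) / (d + χ)) := by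
  constructor
  · refine ⟨-(d + 1), 1, by simp, ?_⟩
    have h1 : |(-(d + 1) : ℝ)| = d + 1 := by rw [abs_neg, abs_of_nonneg]; linarith
    have h2 : -(d + 1) + (d + 1) * 1 = 0 := by ring
    rw [h1, h2, abs_zero, abs_one]
    ring_nf
  · rintro r ⟨a, b, hab, rfl⟩
    have hab' : a ≠ 0 ∨ b ≠ 0 := by
      by_contra h
      push_neg at h
      exact hab (by simp [h.1, h.2])
    have hχ1 : (0:ℝ) < χ - 1 := by linarith
    have hden : 0 < |a| + (χ - 1) * |b| := by
      rcases hab' with h | h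
      · have := abs_pos.mpr h
        positivity
      · have := abs_pos.mpr h
        positivity
    have hdχ : (0:ℝ) < d + χ := by linarith
    rw [div_le_div_iff₀ hden hdχ]
    have habs : |(d+1) * b| = (d+1) * |b| := by
      rw [abs_mul, abs_of_nonneg]; linarith
    have h1 : |a| - (d+1) * |b| ≤ |a + (d+1) * b| := by
      have := abs_sub_abs_le_abs_sub a (-((d+1)*b))
      rw [abs_neg, habs, sub_neg_eq_add] at this
      linarith
    have h2 : (d+1) * |b| - |a| ≤ |a + (d+1) * b| := by
      have := abs_sub_abs_le_abs_sub ((d+1)*b) (-a)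
      rw [abs_neg, habs] at this
      have h3 : (d+1)*b - -a = a + (d+1)*b := by ring
      rw [h3] at this
      linarith
    rcases le_total (|a|) ((d+1) * |b|) with h | h
    · nlinarith [abs_nonneg a, abs_nonneg b]
    · nlinarith [abs_nonneg a, abs_nonneg b]
end

section
/- Let n = #S_d(K), let X = {x ∈ ℝ^n : Σ_i d_i|x_i| = 1} with weights d_i > 0, let I(x) = Σ over cliques of the signless 1-Laplacian energy with I(x) ≤ ‖x‖ always, and suppose W_1, …, W_l is a partition of the index set {1,…,n}. Define I^1_W = {x ∈ X : I(x) = 1 and x_i = 0 for all i ∉ W}. Then I^1_{W_1 ∪ W_2} ⊆ I^1_{W_1} * I^1_{W_2} (topological join) for disjoint W_1, W_2, and hence the Krasnoselskii genus satisfies γ(I^1_{{1,…,n}}) ≤ Σ_{i=1}^l γ(I^1_{W_i}). -/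
/-- Krasnoselskii genus of a symmetric subset of `ℝⁿ`: the least `k` admitting an odd map,
continuous on the set, into the unit sphere of `ℝᵏ` (`⊤` if none exists, `0` for `∅`). -/
noncomputable def genus {n : ℕ} (T : Set (Fin n → ℝ)) : ℕ∞ :=
  sInf {k : ℕ∞ | ∃ m : ℕ, k = (m : ℕ∞) ∧
    ∃ f : (Fin n → ℝ) → EuclideanSpace ℝ (Fin m),
      ContinuousOn f T ∧ (∀ x ∈ T, f (-x) = -f x) ∧ ∀ x ∈ T, ‖f x‖ = 1}

/-- The topological join of two subsets of `ℝⁿ`, realized inside `ℝⁿ`. -/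
def joinSet {n : ℕ} (A B : Set (Fin n → ℝ)) : Set (Fin n → ℝ) :=
  {z | z ∈ A ∨ z ∈ B ∨
    ∃ t ∈ Set.Icc (0 : ℝ) 1, ∃ x ∈ A, ∃ y ∈ B, z = t • x + (1 - t) • y}

/-!
Restricting `x` to the blocks `Wᵢ` of a partition splits it as `x = Σᵢ xᵢ` with
`‖x‖ = Σᵢ ‖xᵢ‖`. As `I` is subadditive and `I ≤ ‖·‖`, the equality `I x = ‖x‖` forces
`I xᵢ = ‖xᵢ‖` for every piece, so each nonzero piece rescales into `I¹_{Wᵢ}`. For two blocks this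
exhibits `x = ‖x₁‖ x̂₁ + ‖x₂‖ x̂₂` as a join point. For the genus, odd maps
`fᵢ : I¹_{Wᵢ} → S^{mᵢ-1}` glue to the odd map `x ↦ (‖xᵢ‖ fᵢ(x̂ᵢ))ᵢ`, which is continuous
because `‖xᵢ‖ fᵢ(x̂ᵢ) → 0` as `xᵢ → 0`, and vanishes nowhere on `I¹`; normalizing it gives
an odd map into `S^{Σ mᵢ - 1}`.
-/

open Set Filter Topology

section Genus

variable {n : ℕ}

theorem genus_le_card {κ : Type*} [Fintype κ] {T : Set (Fin n → ℝ)}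
    (g : (Fin n → ℝ) → EuclideanSpace ℝ κ) (hg : ContinuousOn g T)
    (hg_neg : ∀ x ∈ T, g (-x) = -g x) (hg_ne : ∀ x ∈ T, g x ≠ 0) :
    genus T ≤ Fintype.card κ := by
  let e := LinearIsometryEquiv.piLpCongrLeft 2 ℝ ℝ (Fintype.equivFin κ)
  have hg_norm : ∀ x ∈ T, ‖g x‖ ≠ 0 := fun x hx => norm_ne_zero_iff.2 (hg_ne x hx)
  refine sInf_le ⟨_, rfl, fun x => e (‖g x‖⁻¹ • g x), ?_, fun x hx => ?_, fun x hx => ?_⟩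
  · exact e.continuous.comp_continuousOn ((hg.norm.inv₀ hg_norm).smul hg)
  · simp only [hg_neg x hx, norm_neg, smul_neg, map_neg]
  · rw [e.norm_map, norm_smul, norm_inv, norm_norm, inv_mul_cancel₀ (hg_norm x hx)]

theorem exists_sphere_map_of_genus_ne_top {T : Set (Fin n → ℝ)} (h : genus T ≠ ⊤) :
    ∃ m : ℕ, (m : ℕ∞) = genus T ∧ ∃ f : (Fin n → ℝ) → EuclideanSpace ℝ (Fin m),
      ContinuousOn f T ∧ (∀ x ∈ T, f (-x) = -f x) ∧ ∀ x ∈ T, ‖f x‖ = 1 := by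
  unfold genus at h ⊢
  obtain ⟨k, hk, -⟩ := sInf_lt_iff.1 (lt_top_iff_ne_top.2 h)
  obtain ⟨m, hm, hf⟩ := csInf_mem ⟨k, hk⟩
  exact ⟨m, hm.symm, hf⟩

end Genus

section Cone

variable {X Y E : Type*} [NormedAddCommGroup E] [NormedSpace ℝ E] {w : X → ℝ} {p : X → Y}
  {f : Y → E} {T : Set X} {S : Set Y}

theorem norm_smul_comp_eq (hw : ∀ x, 0 ≤ w x) (hpS : ∀ x ∈ T, 0 < w x → p x ∈ S)
    (hf : ∀ y ∈ S, ‖f y‖ = 1) {x : X} (hx : x ∈ T) : ‖w x • f (p x)‖ = w x := by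
  rcases (hw x).eq_or_lt with h0 | hpos
  · rw [← h0, zero_smul, norm_zero]
  · rw [norm_smul, hf _ (hpS x hx hpos), mul_one, Real.norm_of_nonneg hpos.le]

theorem continuousOn_smul_comp [TopologicalSpace X] [TopologicalSpace Y] (hw : Continuous w)
    (hw0 : ∀ x, 0 ≤ w x)
    (hp : ContinuousOn p {x | 0 < w x}) (hpS : ∀ x ∈ T, 0 < w x → p x ∈ S)
    (hf : ContinuousOn f S) (hf1 : ∀ y ∈ S, ‖f y‖ = 1) :
    ContinuousOn (fun x => w x • f (p x)) T := by
  intro x₀ hx₀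
  rcases (hw0 x₀).eq_or_lt with h0 | hpos
  · have hlim : Tendsto w (𝓝[T] x₀) (𝓝 0) := h0 ▸ hw.continuousWithinAt
    show Tendsto _ _ (𝓝 (w x₀ • f (p x₀)))
    rw [← h0, zero_smul]
    refine squeeze_zero_norm' ?_ hlim
    filter_upwards [self_mem_nhdsWithin] with x hx
    exact (norm_smul_comp_eq hw0 hpS hf1 hx).le
  · have hU : {x | 0 < w x} ∈ 𝓝 x₀ := (isOpen_lt continuous_const hw).mem_nhds hpos
    rw [← continuousWithinAt_inter hU]
    have hpf : ContinuousWithinAt (fun x => f (p x)) (T ∩ {x | 0 < w x}) x₀ :=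
      (hf _ (hpS x₀ hx₀ hpos)).comp ((hp x₀ hpos).mono inter_subset_right)
        fun x hx => hpS x hx.1 hx.2
    exact hw.continuousWithinAt.smul hpf

end Cone

theorem genus_le_sum_of_cover {n : ℕ} {ι : Type*} [Fintype ι] {T : Set (Fin n → ℝ)}
    (S : ι → Set (Fin n → ℝ)) (r : ι → (Fin n → ℝ) →L[ℝ] (Fin n → ℝ))
    {N : (Fin n → ℝ) → ℝ} (hN : Continuous N) (hN_neg : ∀ x, N (-x) = N x)
    (hN_nonneg : ∀ x, 0 ≤ N x)
    (hS : ∀ i, ∀ x ∈ T, 0 < N (r i x) → (N (r i x))⁻¹ • r i x ∈ S i)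
    (hT : ∀ x ∈ T, ∃ i, 0 < N (r i x)) :
    genus T ≤ ∑ i, genus (S i) := by
  by_cases htop : ∃ i, genus (S i) = ⊤
  · obtain ⟨i, hi⟩ := htop
    calc genus T ≤ genus (S i) := hi ▸ le_top
      _ ≤ ∑ i, genus (S i) := Finset.single_le_sum (f := fun j => genus (S j))
        (fun j _ => zero_le) (Finset.mem_univ i)
  push Not at htop
  choose m hm f hf hf_neg hf_norm using fun i => exists_sphere_map_of_genus_ne_top (htop i)
  let cone : ∀ i, (Fin n → ℝ) → EuclideanSpace ℝ (Fin (m i)) :=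
    fun i x => N (r i x) • f i ((N (r i x))⁻¹ • r i x)
  have hcone_norm : ∀ i, ∀ x ∈ T, ‖cone i x‖ = N (r i x) := fun i x hx =>
    norm_smul_comp_eq (fun x => hN_nonneg _) (hS i) (hf_norm i) hx
  have hcone : ∀ i, ContinuousOn (cone i) T := fun i =>
    continuousOn_smul_comp (hN.comp (r i).continuous) (fun x => hN_nonneg _)
      (fun x hx => ((hN.comp (r i).continuous).continuousAt.inv₀ (ne_of_gt hx)).smul
        (r i).continuous.continuousAt |>.continuousWithinAt) (hS i) (hf i) (hf_norm i)
  have hcone_neg : ∀ i, ∀ x ∈ T, cone i (-x) = -cone i x := by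
    intro i x hx
    simp only [cone, map_neg, hN_neg, smul_neg]
    rcases (hN_nonneg (r i x)).eq_or_lt with h0 | hpos
    · rw [← h0, zero_smul, zero_smul, neg_zero]
    · rw [hf_neg i _ (hS i x hx hpos), smul_neg]
  let g (x : Fin n → ℝ) : EuclideanSpace ℝ ((i : ι) × Fin (m i)) :=
    WithLp.toLp 2 fun q => cone q.1 x q.2
  have hg_ne : ∀ x ∈ T, g x ≠ 0 := by
    intro x hx hgx
    obtain ⟨i, hi⟩ := hT x hx
    have hcone0 : cone i x = 0 := by
      ext j
      exact congrFun (congrArg WithLp.ofLp hgx) ⟨i, j⟩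
    exact hi.ne' (by rw [← hcone_norm i x hx, hcone0, norm_zero])
  have hg : ContinuousOn g T :=
    (PiLp.continuous_toLp 2 _).comp_continuousOn <| continuousOn_pi.2 fun q =>
      (PiLp.continuous_apply 2 _ q.2).comp_continuousOn (hcone q.1)
  have hg_neg : ∀ x ∈ T, g (-x) = -g x := fun x hx => by
    ext q
    simp only [g, hcone_neg q.1 x hx]
    rfl
  calc genus T ≤ Fintype.card ((i : ι) × Fin (m i)) := genus_le_card g hg hg_neg hg_ne
    _ = ∑ i, genus (S i) := by simp [hm]

theorem ConvexOn.map_add_le_of_smul {E : Type*} [AddCommGroup E] [Module ℝ E] {f : E → ℝ}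
    (hf : ConvexOn ℝ univ f) (hf_smul : ∀ t : ℝ, 0 ≤ t → ∀ x, f (t • x) = t * f x) (x y : E) :
    f (x + y) ≤ f x + f y := by
  have hmid := hf.2 (mem_univ x) (mem_univ y) (by norm_num : (0 : ℝ) ≤ 2⁻¹)
    (by norm_num : (0 : ℝ) ≤ 2⁻¹) (by norm_num)
  calc f (x + y) = f ((2 : ℝ) • ((2⁻¹ : ℝ) • x + (2⁻¹ : ℝ) • y)) := by
        rw [smul_add, smul_inv_smul₀ two_ne_zero, smul_inv_smul₀ two_ne_zero]
    _ = 2 * f ((2⁻¹ : ℝ) • x + (2⁻¹ : ℝ) • y) := hf_smul 2 zero_le_two _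
    _ ≤ 2 * ((2⁻¹ : ℝ) • f x + (2⁻¹ : ℝ) • f y) := by gcongr
    _ = f x + f y := by simp only [smul_eq_mul]; ring

theorem eq_of_subadditive_of_sum_le {ι E : Type*} [AddCommMonoid E] {I N : E → ℝ}
    (hI_zero : I 0 ≤ 0) (hI_add : ∀ x y, I (x + y) ≤ I x + I y) (hIN : ∀ x, I x ≤ N x)
    {s : Finset ι} {v : ι → E} (hsum : ∑ i ∈ s, N (v i) ≤ I (∑ i ∈ s, v i)) {i : ι}
    (hi : i ∈ s) : I (v i) = N (v i) := by
  have hle : ∀ i ∈ s, I (v i) ≤ N (v i) := fun i _ => hIN _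
  exact (Finset.sum_eq_sum_iff_of_le hle).1 (le_antisymm (Finset.sum_le_sum hle)
    (hsum.trans (Finset.le_sum_of_subadditive I hI_zero hI_add s v))) i hi

theorem add_mem_joinSet {n : ℕ} {A B : Set (Fin n → ℝ)} {N : (Fin n → ℝ) → ℝ}
    (hN_nonneg : ∀ y, 0 ≤ N y) (hN_eq_zero : ∀ y, N y = 0 → y = 0) {a b : Fin n → ℝ}
    (hab : N a + N b = 1) (ha : 0 < N a → (N a)⁻¹ • a ∈ A) (hb : 0 < N b → (N b)⁻¹ • b ∈ B) :
    a + b ∈ joinSet A B := by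
  rcases (hN_nonneg a).eq_or_lt with ha0 | ha_pos
  · have hb1 : N b = 1 := by linarith
    right; left
    simpa [hN_eq_zero a ha0.symm, hb1] using hb (by linarith)
  rcases (hN_nonneg b).eq_or_lt with hb0 | hb_pos
  · have ha1 : N a = 1 := by linarith
    left
    simpa [hN_eq_zero b hb0.symm, ha1] using ha (by linarith)
  right; right
  refine ⟨N a, ⟨ha_pos.le, by linarith⟩, _, ha ha_pos, _, hb hb_pos, ?_⟩
  rw [show 1 - N a = N b by linarith, smul_inv_smul₀ ha_pos.ne', smul_inv_smul₀ hb_pos.ne']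

section LevelSet

variable {n : ℕ}

noncomputable def weightedNorm (d x : Fin n → ℝ) : ℝ := ∑ j, d j * |x j|

/-- The set `I¹_W`. -/
def levelSet (d : Fin n → ℝ) (I : (Fin n → ℝ) → ℝ) (W : Finset (Fin n)) : Set (Fin n → ℝ) :=
  {x | weightedNorm d x = 1 ∧ I x = 1 ∧ ∀ j ∉ W, x j = 0}

noncomputable def coordRestrict (W : Finset (Fin n)) : (Fin n → ℝ) →L[ℝ] (Fin n → ℝ) :=
  ContinuousLinearMap.pi fun j => if j ∈ W then ContinuousLinearMap.proj j else 0

theorem coordRestrict_apply (W : Finset (Fin n)) (x : Fin n → ℝ) (j : Fin n) :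
    coordRestrict W x j = if j ∈ W then x j else 0 := by
  unfold coordRestrict
  split_ifs <;> simp [*]

variable {d : Fin n → ℝ}

theorem weightedNorm_nonneg (hd : ∀ j, 0 ≤ d j) (x : Fin n → ℝ) : 0 ≤ weightedNorm d x :=
  Finset.sum_nonneg fun j _ => mul_nonneg (hd j) (abs_nonneg _)

theorem weightedNorm_neg (x : Fin n → ℝ) : weightedNorm d (-x) = weightedNorm d x := by
  simp [weightedNorm]

theorem weightedNorm_smul {c : ℝ} (hc : 0 ≤ c) (x : Fin n → ℝ) :
    weightedNorm d (c • x) = c * weightedNorm d x := by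
  simp only [weightedNorm, Finset.mul_sum, Pi.smul_apply, smul_eq_mul, abs_mul, abs_of_nonneg hc]
  exact Finset.sum_congr rfl fun j _ => by ring

theorem continuous_weightedNorm : Continuous (weightedNorm (n := n) d) := by
  unfold weightedNorm
  fun_prop

theorem eq_zero_of_weightedNorm_eq_zero (hd : ∀ j, 0 < d j) {x : Fin n → ℝ}
    (hx : weightedNorm d x = 0) : x = 0 := by
  ext j
  have hj := (Finset.sum_eq_zero_iff_of_nonneg fun k _ => mul_nonneg (hd k).le (abs_nonneg (x k))).1
    hx j (Finset.mem_univ j)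
  simpa [(hd j).ne'] using hj

theorem weightedNorm_coordRestrict (W : Finset (Fin n)) (x : Fin n → ℝ) :
    weightedNorm d (coordRestrict W x) = ∑ j ∈ W, d j * |x j| := by
  simp [weightedNorm, coordRestrict_apply, apply_ite, Finset.sum_ite_mem]

variable {ι : Type*} {s : Finset ι} {W : ι → Finset (Fin n)} {x : Fin n → ℝ}

theorem sum_coordRestrict (hW : (s : Set ι).PairwiseDisjoint W)
    (hx : ∀ j ∉ s.biUnion W, x j = 0) : ∑ i ∈ s, coordRestrict (W i) x = x := by
  ext j
  simp only [Finset.sum_apply, coordRestrict_apply]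
  by_cases hj : j ∈ s.biUnion W
  · obtain ⟨i, hi, hji⟩ := Finset.mem_biUnion.1 hj
    rw [Finset.sum_eq_single_of_mem i hi fun i' hi' hne =>
      if_neg fun hji' => Finset.disjoint_left.1 (hW hi' hi hne) hji' hji, if_pos hji]
  · rw [hx j hj]
    exact Finset.sum_eq_zero fun i hi => by simp

theorem sum_weightedNorm_coordRestrict (hW : (s : Set ι).PairwiseDisjoint W)
    (hx : ∀ j ∉ s.biUnion W, x j = 0) :
    ∑ i ∈ s, weightedNorm d (coordRestrict (W i) x) = weightedNorm d x := by
  classical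
  simp only [weightedNorm_coordRestrict]
  rw [← Finset.sum_biUnion hW]
  exact Finset.sum_subset (Finset.subset_univ _) fun j _ hj => by simp [hx j hj]

variable {I : (Fin n → ℝ) → ℝ}

theorem inv_smul_coordRestrict_mem_levelSet (hI_add : ∀ x y, I (x + y) ≤ I x + I y)
    (hI_smul : ∀ t : ℝ, 0 ≤ t → ∀ x, I (t • x) = t * I x) (hIle : ∀ x, I x ≤ weightedNorm d x)
    (hW : (s : Set ι).PairwiseDisjoint W) (hx : ∀ j ∉ s.biUnion W, x j = 0)
    (hIx : weightedNorm d x ≤ I x) {i : ι} (hi : i ∈ s)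
    (hpos : 0 < weightedNorm d (coordRestrict (W i) x)) :
    (weightedNorm d (coordRestrict (W i) x))⁻¹ • coordRestrict (W i) x ∈ levelSet d I (W i) := by
  have hI_zero : I 0 ≤ 0 := by simpa using (hI_smul 0 le_rfl 0).le
  have hIa : I (coordRestrict (W i) x) = weightedNorm d (coordRestrict (W i) x) :=
    eq_of_subadditive_of_sum_le (v := fun i => coordRestrict (W i) x) hI_zero hI_add hIle
      (by rwa [sum_coordRestrict hW hx, sum_weightedNorm_coordRestrict hW hx]) hi
  have hc : 0 ≤ (weightedNorm d (coordRestrict (W i) x))⁻¹ := inv_nonneg.2 hpos.le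
  refine ⟨?_, ?_, fun j hj => by simp [coordRestrict_apply, hj]⟩
  · rw [weightedNorm_smul hc, inv_mul_cancel₀ hpos.ne']
  · rw [hI_smul _ hc, hIa, inv_mul_cancel₀ hpos.ne']

theorem levelSet_union_subset_joinSet (hd : ∀ j, 0 < d j)
    (hI_add : ∀ x y, I (x + y) ≤ I x + I y)
    (hI_smul : ∀ t : ℝ, 0 ≤ t → ∀ x, I (t • x) = t * I x) (hIle : ∀ x, I x ≤ weightedNorm d x)
    {W₁ W₂ : Finset (Fin n)} (h : Disjoint W₁ W₂) :
    levelSet d I (W₁ ∪ W₂) ⊆ joinSet (levelSet d I W₁) (levelSet d I W₂) := by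
  rintro x ⟨hx_norm, hIx, hx⟩
  let V : Fin 2 → Finset (Fin n) := ![W₁, W₂]
  have hV : ((Finset.univ : Finset (Fin 2)) : Set (Fin 2)).PairwiseDisjoint V := by
    intro i _ j _ hij
    fin_cases i <;> fin_cases j <;> simp_all [V, Function.onFun, h.symm]
  have hxV : ∀ j ∉ Finset.univ.biUnion V, x j = 0 := fun j hj =>
    hx j (by simpa [V, Fin.exists_fin_two] using hj)
  have hpiece := fun i => inv_smul_coordRestrict_mem_levelSet hI_add hI_smul hIle hV hxV
    (hx_norm.trans hIx.symm).le (Finset.mem_univ i)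
  have hsum := sum_coordRestrict hV hxV
  have hnorm := sum_weightedNorm_coordRestrict (d := d) hV hxV
  rw [Fin.sum_univ_two] at hsum hnorm
  rw [← hsum]
  exact add_mem_joinSet (weightedNorm_nonneg fun j => (hd j).le)
    (fun y => eq_zero_of_weightedNorm_eq_zero hd) (hnorm.trans hx_norm) (hpiece 0) (hpiece 1)

end LevelSet

theorem stmt19_general {n : ℕ} (d : Fin n → ℝ) (hd : ∀ i, 0 < d i)
    (I : (Fin n → ℝ) → ℝ) (hIc : ConvexOn ℝ Set.univ I)
    (hIh : ∀ t : ℝ, 0 ≤ t → ∀ x, I (t • x) = t * I x)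
    (hIle : ∀ x, I x ≤ ∑ j, d j * |x j|)
    (l : ℕ) (W : Fin l → Finset (Fin n))
    (hdisj : ∀ i j, i ≠ j → Disjoint (W i) (W j))
    (hcover : ∀ k : Fin n, ∃ i, k ∈ W i) :
    (∀ W₁ W₂ : Finset (Fin n), Disjoint W₁ W₂ →
      {x : Fin n → ℝ | (∑ j, d j * |x j|) = 1 ∧ I x = 1 ∧ ∀ j ∉ W₁ ∪ W₂, x j = 0} ⊆
        joinSet
          {x : Fin n → ℝ | (∑ j, d j * |x j|) = 1 ∧ I x = 1 ∧ ∀ j ∉ W₁, x j = 0}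
          {x : Fin n → ℝ | (∑ j, d j * |x j|) = 1 ∧ I x = 1 ∧ ∀ j ∉ W₂, x j = 0}) ∧
    genus {x : Fin n → ℝ | (∑ j, d j * |x j|) = 1 ∧ I x = 1} ≤
      ∑ i : Fin l,
        genus {x : Fin n → ℝ | (∑ j, d j * |x j|) = 1 ∧ I x = 1 ∧ ∀ k ∉ W i, x k = 0} := by
  have hI_add := hIc.map_add_le_of_smul hIh
  refine ⟨fun W₁ W₂ h => levelSet_union_subset_joinSet hd hI_add hIh hIle h, ?_⟩
  have hW : ((Finset.univ : Finset (Fin l)) : Set (Fin l)).PairwiseDisjoint W :=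
    fun i _ j _ hij => hdisj i j hij
  have hx : ∀ x : Fin n → ℝ, ∀ j ∉ Finset.univ.biUnion W, x j = 0 := fun x j hj =>
    absurd (Finset.mem_biUnion.2 (by simpa using hcover j)) hj
  refine genus_le_sum_of_cover (fun i => levelSet d I (W i)) (fun i => coordRestrict (W i))
    continuous_weightedNorm weightedNorm_neg (weightedNorm_nonneg fun j => (hd j).le)
    (fun i x hx_mem hpos => inv_smul_coordRestrict_mem_levelSet hI_add hIh hIle hW (hx x)
      (hx_mem.1.trans hx_mem.2.symm).le (Finset.mem_univ i) hpos) fun x hx_mem => ?_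
  have hsum : ∑ i, weightedNorm d (coordRestrict (W i) x) = 1 :=
    (sum_weightedNorm_coordRestrict hW (hx x)).trans hx_mem.1
  by_contra! hnonpos
  linarith [Finset.sum_nonpos fun i (_ : i ∈ Finset.univ) => hnonpos i]

/-- For a convex, even, one-homogeneous `I` with `I ≤ ‖·‖₁,d`, the level sets
`I¹_W = {x : ‖x‖ = 1, I x = 1, supp x ⊆ W}` satisfy `I¹_{W₁∪W₂} ⊆ I¹_{W₁} * I¹_{W₂}` for
disjoint `W₁, W₂`, and the Krasnoselskii genus is subadditive over a partition:
`γ(I¹) ≤ Σᵢ γ(I¹_{Wᵢ})`. -/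
theorem stmt19 {n : ℕ} (d : Fin n → ℝ) (hd : ∀ i, 0 < d i)
    (I : (Fin n → ℝ) → ℝ) (hIc : ConvexOn ℝ Set.univ I)
    (hIe : ∀ x, I (-x) = I x)
    (hIh : ∀ t : ℝ, 0 ≤ t → ∀ x, I (t • x) = t * I x)
    (hIle : ∀ x, I x ≤ ∑ j, d j * |x j|)
    (l : ℕ) (W : Fin l → Finset (Fin n))
    (hdisj : ∀ i j, i ≠ j → Disjoint (W i) (W j))
    (hcover : ∀ k : Fin n, ∃ i, k ∈ W i) :
    (∀ W₁ W₂ : Finset (Fin n), Disjoint W₁ W₂ →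
      {x : Fin n → ℝ | (∑ j, d j * |x j|) = 1 ∧ I x = 1 ∧ ∀ j ∉ W₁ ∪ W₂, x j = 0} ⊆
        joinSet
          {x : Fin n → ℝ | (∑ j, d j * |x j|) = 1 ∧ I x = 1 ∧ ∀ j ∉ W₁, x j = 0}
          {x : Fin n → ℝ | (∑ j, d j * |x j|) = 1 ∧ I x = 1 ∧ ∀ j ∉ W₂, x j = 0}) ∧
    genus {x : Fin n → ℝ | (∑ j, d j * |x j|) = 1 ∧ I x = 1} ≤
      ∑ i : Fin l,
        genus {x : Fin n → ℝ | (∑ j, d j * |x j|) = 1 ∧ I x = 1 ∧ ∀ k ∉ W i, x k = 0} :=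
  stmt19_general d hd I hIc hIh hIle l W hdisj hcover
end
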